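/- arXiv:2101.11470 — 2 statements merged into one kernel-verified Lean document; each statement's English description precedes it below -/
import Mathlib

section
/- Let g ≤ k and suppose the k variables partition into g groups with identical within-group missingness patterns, the n rows of group-level indicators are mutually independent, and each group-level conditional observation probability is bounded by q ∈ [0,1). Then the probability that listwise deletion removes all rows is at least (1 - q^g)^n. -/
/-!
By the chain rule, a row is fully observed with probability
`∏ⱼ Pr(group j observed | groups < j observed) ≤ q ^ g`, so it is deleted with probability at
least `1 - q ^ g`; independence of the rows multiplies these bounds.
-/

open MeasureTheory ProbabilityTheory
open scoped ENNReal

lemma Fin.iInter_val_lt_succ {α : Type*} {g t : ℕ} (S : Fin g → Set α) (ht : t < g) :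
    ⋂ m : Fin g, ⋂ _ : (m : ℕ) < t + 1, S m
      = (⋂ m : Fin g, ⋂ _ : (m : ℕ) < t, S m) ∩ S ⟨t, ht⟩ := by
  ext x
  simp only [Set.mem_iInter, Set.mem_inter_iff, Nat.lt_succ_iff_lt_or_eq, or_imp, forall_and]
  constructor
  · rintro ⟨h, h'⟩
    exact ⟨h, h' _ rfl⟩
  · rintro ⟨h, h'⟩
    refine ⟨h, fun m hm => ?_⟩
    obtain rfl : m = ⟨t, ht⟩ := Fin.ext hm
    exact h'

section

variable {Ω : Type*} [MeasurableSpace Ω] {μ : Measure Ω}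

lemma measure_inter_le_mul_of_cond_le [IsFiniteMeasure μ] {s t : Set Ω} {q : ℝ≥0∞}
    (hs : MeasurableSet s) (h : μ s ≠ 0 → μ[t | s] ≤ q) : μ (s ∩ t) ≤ q * μ s := by
  rcases eq_or_ne (μ s) 0 with h0 | h0
  · simp [measure_inter_null_of_null_left, h0]
  · rw [← cond_mul_eq_inter hs]
    exact mul_le_mul_left (h h0) _

lemma one_sub_measure_compl_le [IsProbabilityMeasure μ] (s : Set Ω) : 1 - μ sᶜ ≤ μ s := by
  rw [tsub_le_iff_right, ← measure_univ (μ := μ), ← Set.union_compl_self s]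
  exact measure_union_le s sᶜ

theorem measure_iInter_le_pow_of_cond_le [IsProbabilityMeasure μ] {g : ℕ} {S : Fin g → Set Ω}
    (hS : ∀ j, MeasurableSet (S j)) {q : ℝ≥0∞}
    (hq : ∀ j, μ (⋂ m < j, S m) ≠ 0 → μ[S j | ⋂ m < j, S m] ≤ q) :
    μ (⋂ j, S j) ≤ q ^ g := by
  have prefix_le : ∀ t ≤ g, μ (⋂ m : Fin g, ⋂ _ : (m : ℕ) < t, S m) ≤ q ^ t := by
    intro t
    induction t with
    | zero => simp
    | succ t ih =>
      intro ht
      rw [Fin.iInter_val_lt_succ S ht, pow_succ']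
      have hmeas : MeasurableSet (⋂ m : Fin g, ⋂ _ : (m : ℕ) < t, S m) :=
        .iInter fun m => .iInter fun _ => hS m
      calc _ ≤ q * μ (⋂ m : Fin g, ⋂ _ : (m : ℕ) < t, S m) :=
            measure_inter_le_mul_of_cond_le hmeas (hq ⟨t, ht⟩)
        _ ≤ q * q ^ t := by gcongr; exact ih (Nat.le_of_succ_le ht)
  simpa using prefix_le g le_rfl

theorem ProbabilityTheory.iIndepFun.one_sub_pow_le_measure_iInter_preimage
    [IsProbabilityMeasure μ] {ι : Type*} [Fintype ι] {β : ι → Type*}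
    [∀ i, MeasurableSpace (β i)] {X : ∀ i, Ω → β i} (hX : iIndepFun X μ)
    {A : ∀ i, Set (β i)} (hA : ∀ i, MeasurableSet (A i)) {p : ℝ≥0∞}
    (hp : ∀ i, μ (X i ⁻¹' (A i)ᶜ) ≤ p) :
    (1 - p) ^ Fintype.card ι ≤ μ (⋂ i, X i ⁻¹' A i) := by
  rw [hX.meas_iInter fun i => ⟨A i, hA i, rfl⟩, ← Finset.card_univ, ← Finset.prod_const]
  refine Finset.prod_le_prod' fun i _ => ?_
  calc 1 - p ≤ 1 - μ (X i ⁻¹' A i)ᶜ := tsub_le_tsub_left (hp i) 1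
    _ ≤ μ (X i ⁻¹' A i) := one_sub_measure_compl_le _

end

theorem group_listwise_deletion_lower_bound_general
    {Ω : Type*} [MeasurableSpace Ω] (μ : Measure Ω) [IsProbabilityMeasure μ]
    (n g : ℕ) (hg : 1 ≤ g)
    (M : Fin n → Fin g → Ω → Bool)
    (hM : ∀ i j, Measurable (M i j))
    (hindep : iIndepFun
      (fun i ω => fun j => M i j ω) μ)
    (q : ℝ≥0∞)
    (h1 : ∀ i, μ {ω | M i ⟨0, hg⟩ ω = false} ≤ q)
    (hcond : ∀ i, ∀ j : Fin g, 0 < j.val →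
      μ (⋂ m : Fin g, ⋂ _ : m < j, {ω | M i m ω = false}) ≠ 0 →
      (μ[|⋂ m : Fin g, ⋂ _ : m < j, {ω | M i m ω = false}])
        {ω | M i j ω = false} ≤ q) :
    (1 - q ^ g) ^ n ≤ μ {ω | ∀ i : Fin n, ∃ j : Fin g, M i j ω = true} := by
  have row_observed_le : ∀ i, μ (⋂ j, {ω | M i j ω = false}) ≤ q ^ g := fun i =>
    measure_iInter_le_pow_of_cond_le (fun j => hM i j (measurableSet_singleton false)) fun j => by
      rcases Nat.eq_zero_or_pos j with hj | hj
      · obtain rfl : j = ⟨0, hg⟩ := Fin.ext hj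
        simp only [Fin.lt_def, not_lt_zero, Set.iInter_of_empty, Set.iInter_univ, measure_univ,
          ne_eq, one_ne_zero, not_false_eq_true, cond_univ, forall_const]
        exact h1 i
      · exact hcond i j hj
  have hA : MeasurableSet {v : Fin g → Bool | ∃ j, v j = true} := .of_discrete
  have all_deleted := hindep.one_sub_pow_le_measure_iInter_preimage (fun _ => hA) fun i => by
    convert row_observed_le i using 2
    ext
    simp
  simpa [Set.iInter_ofPred] using all_deleted

/-- group-level Lemma 8: with `g ≤ k` groups of variables sharing
missingness patterns, mutually independent rows of group-level indicators
(`M i j ω = true` means group `j` of row `i` is missing), and group-level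
conditional observation probabilities bounded by `q < 1`, the probability that
listwise deletion removes all rows is at least `(1 - q^g)^n`. -/
theorem group_listwise_deletion_lower_bound
    {Ω : Type*} [MeasurableSpace Ω] (μ : Measure Ω) [IsProbabilityMeasure μ]
    (n g k : ℕ) (hg : 1 ≤ g) (hgk : g ≤ k)
    (M : Fin n → Fin g → Ω → Bool)
    (hM : ∀ i j, Measurable (M i j))
    (hindep : iIndepFun
      (fun i ω => fun j => M i j ω) μ)
    (q : ℝ≥0∞) (hq : q < 1)
    (h1 : ∀ i, μ {ω | M i ⟨0, hg⟩ ω = false} ≤ q)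
    (hcond : ∀ i, ∀ j : Fin g, 0 < j.val →
      μ (⋂ m : Fin g, ⋂ _ : m < j, {ω | M i m ω = false}) ≠ 0 →
      (μ[|⋂ m : Fin g, ⋂ _ : m < j, {ω | M i m ω = false}])
        {ω | M i j ω = false} ≤ q) :
    (1 - q ^ g) ^ n ≤ μ {ω | ∀ i : Fin n, ∃ j : Fin g, M i j ω = true} :=
  group_listwise_deletion_lower_bound_general μ n g hg M hM hindep q h1 hcond
end

section
/- For q ∈ (0,1), the sequence a_n = (1 - q^{f(n)})^n with f(n) = ⌊(log n)^{1.1}⌋ converges to 1 as n → ∞. -/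
open Filter

lemma aux_tendsto_mul_pow_zero (q : ℝ) (hq0 : 0 < q) (hq1 : q < 1) :
    Tendsto (fun n : ℕ => (n : ℝ) * q ^ ⌊(Real.log n) ^ (1.1 : ℝ)⌋₊)
      atTop (nhds 0) := by
  have hlogq : Real.log q < 0 := Real.log_neg hq0 hq1
  -- the exponent inside exp
  have key : Tendsto (fun n : ℕ =>
      Real.log n + ((Real.log n) ^ (1.1 : ℝ) - 1) * Real.log q) atTop atBot := by
    have hL : Tendsto (fun n : ℕ => Real.log n) atTop atTop :=
      Real.tendsto_log_atTop.comp tendsto_natCast_atTop_atTop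
    have hL01 : Tendsto (fun n : ℕ => (Real.log n) ^ (0.1 : ℝ)) atTop atTop :=
      (tendsto_rpow_atTop (by norm_num)).comp hL
    -- eventually log n ≥ 1 and (log n)^0.1 * (-log q) ≥ 2
    have h1 : ∀ᶠ n : ℕ in atTop, (1 : ℝ) ≤ Real.log n := hL.eventually_ge_atTop 1
    have h2 : ∀ᶠ n : ℕ in atTop, (2 / (-Real.log q)) ≤ (Real.log n) ^ (0.1 : ℝ) :=
      hL01.eventually_ge_atTop _
    have hbound : ∀ᶠ n : ℕ in atTop,
        Real.log n + ((Real.log n) ^ (1.1 : ℝ) - 1) * Real.log q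
          ≤ -Real.log n - Real.log q := by
      filter_upwards [h1, h2] with n hn1 hn2
      set L := Real.log n with hLdef
      have hLpos : 0 < L := lt_of_lt_of_le one_pos hn1
      have hsplit : L ^ (1.1 : ℝ) = L * L ^ (0.1 : ℝ) := by
        rw [show (1.1 : ℝ) = 1 + 0.1 by norm_num, Real.rpow_add hLpos,
          Real.rpow_one]
      have h2' : 2 ≤ L ^ (0.1 : ℝ) * (-Real.log q) := by
        rw [div_le_iff₀ (by linarith)] at hn2
        linarith [hn2]
      have : 2 * L ≤ L ^ (1.1 : ℝ) * (-Real.log q) := by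
        rw [hsplit, mul_assoc]
        calc 2 * L = L * 2 := by ring
        _ ≤ L * (L ^ (0.1 : ℝ) * (-Real.log q)) := by
            exact mul_le_mul_of_nonneg_left h2' hLpos.le
      nlinarith
    have hlim : Tendsto (fun n : ℕ => -Real.log n - Real.log q) atTop atBot := by
      exact tendsto_atBot_add_const_right _ _ (tendsto_neg_atBot_iff.mpr hL)
    exact tendsto_atBot_mono' atTop hbound hlim
  have hexp : Tendsto (fun n : ℕ =>
      Real.exp (Real.log n + ((Real.log n) ^ (1.1 : ℝ) - 1) * Real.log q))
      atTop (nhds 0) := Real.tendsto_exp_atBot.comp key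
  have h0 : Tendsto (fun _ : ℕ => (0 : ℝ)) atTop (nhds 0) := tendsto_const_nhds
  refine tendsto_of_tendsto_of_tendsto_of_le_of_le' h0 hexp ?_ ?_
  · filter_upwards [eventually_ge_atTop 1] with n hn
    positivity
  · filter_upwards [(Real.tendsto_log_atTop.comp
      (tendsto_natCast_atTop_atTop (R := ℝ))).eventually_ge_atTop 1,
      eventually_ge_atTop 1] with n hn1 hn'
    have hnpos : (0 : ℝ) < n := by exact_mod_cast hn'
    set L := Real.log n with hLdef
    have hLpos : (0 : ℝ) < L := lt_of_lt_of_le one_pos hn1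
    have hfloor : L ^ (1.1 : ℝ) - 1 ≤ (⌊L ^ (1.1 : ℝ)⌋₊ : ℝ) := by
      have := Nat.lt_floor_add_one (L ^ (1.1 : ℝ))
      have hnn : (0:ℝ) ≤ L ^ (1.1 : ℝ) := Real.rpow_nonneg hLpos.le _
      have := Nat.sub_one_lt_floor (L ^ (1.1 : ℝ))
      linarith
    have hq' : q ^ ⌊L ^ (1.1 : ℝ)⌋₊ ≤ q ^ ((L ^ (1.1 : ℝ) - 1) : ℝ) := by
      rw [← Real.rpow_natCast q]
      exact Real.rpow_le_rpow_of_exponent_ge hq0 hq1.le hfloor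
    calc (n : ℝ) * q ^ ⌊L ^ (1.1 : ℝ)⌋₊
        ≤ (n : ℝ) * q ^ ((L ^ (1.1 : ℝ) - 1) : ℝ) :=
          mul_le_mul_of_nonneg_left hq' hnpos.le
      _ = Real.exp (L + (L ^ (1.1 : ℝ) - 1) * Real.log q) := by
          rw [Real.rpow_def_of_pos hq0]
          conv_lhs => rw [show (n:ℝ) = Real.exp L from (Real.exp_log hnpos).symm]
          rw [← Real.exp_add]
          ring_nf

/-- concrete instance with `f(n) = ⌊(log n)^1.1⌋`:
the sequence `(1 - q^(f n))^n` converges to `1`. -/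
theorem concrete_rate_tendsto_one
    (q : ℝ) (hq0 : 0 < q) (hq1 : q < 1) :
    Tendsto (fun n : ℕ => (1 - q ^ ⌊(Real.log n) ^ (1.1 : ℝ)⌋₊) ^ n)
      atTop (nhds 1) := by
  have hmul := aux_tendsto_mul_pow_zero q hq0 hq1
  have hlow : Tendsto (fun n : ℕ =>
      1 - (n : ℝ) * q ^ ⌊(Real.log n) ^ (1.1 : ℝ)⌋₊) atTop (nhds 1) := by
    simpa using (tendsto_const_nhds (x := (1:ℝ)) (f := atTop)).sub hmul
  refine tendsto_of_tendsto_of_tendsto_of_le_of_le' hlow tendsto_const_nhds ?_ ?_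
  · filter_upwards with n
    have hqpow : (0 : ℝ) ≤ q ^ ⌊(Real.log n) ^ (1.1 : ℝ)⌋₊ := by positivity
    have h2 : (-2 : ℝ) ≤ -(q ^ ⌊(Real.log n) ^ (1.1 : ℝ)⌋₊) := by
      have : q ^ ⌊(Real.log n) ^ (1.1 : ℝ)⌋₊ ≤ 1 :=
        pow_le_one₀ hq0.le hq1.le
      linarith
    have := one_add_mul_le_pow h2 n
    have heq : (1 : ℝ) + -(q ^ ⌊(Real.log n) ^ (1.1 : ℝ)⌋₊) =
        1 - q ^ ⌊(Real.log n) ^ (1.1 : ℝ)⌋₊ := by ring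
    rw [heq] at this
    calc 1 - (n : ℝ) * q ^ ⌊(Real.log n) ^ (1.1 : ℝ)⌋₊
        = 1 + (n : ℝ) * -(q ^ ⌊(Real.log n) ^ (1.1 : ℝ)⌋₊) := by ring
      _ ≤ (1 - q ^ ⌊(Real.log n) ^ (1.1 : ℝ)⌋₊) ^ n := by
          rw [heq] at *
          exact le_trans (by ring_nf; linarith [this]) (le_refl _)
  · filter_upwards with n
    have hqpow : (0 : ℝ) ≤ q ^ ⌊(Real.log n) ^ (1.1 : ℝ)⌋₊ := by positivity
    have h1 : 1 - q ^ ⌊(Real.log n) ^ (1.1 : ℝ)⌋₊ ≤ 1 := by linarith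
    have h0 : 0 ≤ 1 - q ^ ⌊(Real.log n) ^ (1.1 : ℝ)⌋₊ := by
      have : q ^ ⌊(Real.log n) ^ (1.1 : ℝ)⌋₊ ≤ 1 := pow_le_one₀ hq0.le hq1.le
      linarith
    calc (1 - q ^ ⌊(Real.log n) ^ (1.1 : ℝ)⌋₊) ^ n ≤ 1 ^ n :=
          pow_le_pow_left₀ h0 h1 n
      _ = 1 := one_pow n
end
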